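/- If N is a pure submodule of a left R-module M and both N and M/N are 𝒦-Mittag-Leffler, then M is 𝒦-Mittag-Leffler; moreover any pure submodule of a 𝒦-Mittag-Leffler module is 𝒦-Mittag-Leffler. -/

import Mathlib

open MulOpposite

section CTensor
variable (R : Type) [Ring R]
variable (N : Type) [AddCommGroup N] [Module Rᵐᵒᵖ N]
variable (M : Type) [AddCommGroup M] [Module R M]

def tensorRels : AddSubgroup (FreeAbelianGroup (N × M)) :=
  AddSubgroup.closure
    {x | (∃ n n' m, x = FreeAbelianGroup.of (n + n', m) - FreeAbelianGroup.of (n, m) -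
            FreeAbelianGroup.of (n', m)) ∨
         (∃ n m m', x = FreeAbelianGroup.of (n, m + m') - FreeAbelianGroup.of (n, m) -
            FreeAbelianGroup.of (n, m')) ∨
         (∃ (r : R) (n : N) (m : M), x = FreeAbelianGroup.of (op r • n, m) -
            FreeAbelianGroup.of (n, r • m))}

abbrev CTensor : Type := FreeAbelianGroup (N × M) ⧸ tensorRels R N M

def ctmul (n : N) (m : M) : CTensor R N M :=
  QuotientAddGroup.mk (FreeAbelianGroup.of (n, m))

variable {R N M}

theorem ctmul_add_left (n n' : N) (m : M) :
    ctmul R N M (n + n') m = ctmul R N M n m + ctmul R N M n' m := by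
  rw [eq_comm, ← sub_eq_zero]
  show QuotientAddGroup.mk _ + QuotientAddGroup.mk _ - QuotientAddGroup.mk _ = (0 : CTensor R N M)
  rw [← QuotientAddGroup.mk_add, ← QuotientAddGroup.mk_sub, QuotientAddGroup.eq_zero_iff]
  have h : FreeAbelianGroup.of (n, m) + FreeAbelianGroup.of (n', m) -
      FreeAbelianGroup.of (n + n', m) =
      -(FreeAbelianGroup.of (n + n', m) - FreeAbelianGroup.of (n, m) -
        FreeAbelianGroup.of (n', m)) := by abel
  rw [h]
  exact neg_mem (AddSubgroup.subset_closure (Or.inl ⟨n, n', m, rfl⟩))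

theorem ctmul_add_right (n : N) (m m' : M) :
    ctmul R N M n (m + m') = ctmul R N M n m + ctmul R N M n m' := by
  rw [eq_comm, ← sub_eq_zero]
  show QuotientAddGroup.mk _ + QuotientAddGroup.mk _ - QuotientAddGroup.mk _ = (0 : CTensor R N M)
  rw [← QuotientAddGroup.mk_add, ← QuotientAddGroup.mk_sub, QuotientAddGroup.eq_zero_iff]
  have h : FreeAbelianGroup.of (n, m) + FreeAbelianGroup.of (n, m') -
      FreeAbelianGroup.of (n, m + m') =
      -(FreeAbelianGroup.of (n, m + m') - FreeAbelianGroup.of (n, m) -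
        FreeAbelianGroup.of (n, m')) := by abel
  rw [h]
  exact neg_mem (AddSubgroup.subset_closure (Or.inr (Or.inl ⟨n, m, m', rfl⟩)))

theorem ctmul_smul (r : R) (n : N) (m : M) :
    ctmul R N M (op r • n) m = ctmul R N M n (r • m) := by
  rw [← sub_eq_zero]
  show QuotientAddGroup.mk _ - QuotientAddGroup.mk _ = (0 : CTensor R N M)
  rw [← QuotientAddGroup.mk_sub, QuotientAddGroup.eq_zero_iff]
  apply AddSubgroup.subset_closure
  right; right
  exact ⟨r, n, m, rfl⟩

variable (R N M)

/-- Universal property: lift a balanced biadditive map to the balanced tensor product. -/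
def ctlift {A : Type} [AddCommGroup A] (f : N → M → A)
    (h1 : ∀ n n' m, f (n + n') m = f n m + f n' m)
    (h2 : ∀ n m m', f n (m + m') = f n m + f n m')
    (h3 : ∀ (r : R) n m, f (op r • n) m = f n (r • m)) :
    CTensor R N M →+ A :=
  QuotientAddGroup.lift _ (FreeAbelianGroup.lift fun p => f p.1 p.2) (by
    rw [tensorRels, AddSubgroup.closure_le]
    rintro x (⟨n, n', m, rfl⟩ | ⟨n, m, m', rfl⟩ | ⟨r, n, m, rfl⟩) <;>
      simp [AddMonoidHom.mem_ker, FreeAbelianGroup.lift_apply_of, h1, h2, h3])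

@[simp] theorem ctlift_ctmul {A : Type} [AddCommGroup A] (f : N → M → A) (h1) (h2) (h3)
    (n : N) (m : M) : ctlift R N M f h1 h2 h3 (ctmul R N M n m) = f n m := by
  simp [ctlift, ctmul, QuotientAddGroup.lift_mk, FreeAbelianGroup.lift_apply_of]

end CTensor

section Maps
variable (R : Type) [Ring R]

/-- Functoriality of the balanced tensor product in the right-module variable. -/
def ctmapLeft {N N' : Type} [AddCommGroup N] [Module Rᵐᵒᵖ N] [AddCommGroup N']
    [Module Rᵐᵒᵖ N'] (f : N →ₗ[Rᵐᵒᵖ] N') (M : Type) [AddCommGroup M] [Module R M] :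
    CTensor R N M →+ CTensor R N' M :=
  ctlift R N M (fun n m => ctmul R N' M (f n) m)
    (fun n n' m => by rw [map_add, ctmul_add_left])
    (fun n m m' => by rw [ctmul_add_right])
    (fun r n m => by rw [map_smul, ctmul_smul])

/-- Functoriality of the balanced tensor product in the left-module variable. -/
def ctmapRight (N : Type) [AddCommGroup N] [Module Rᵐᵒᵖ N] {M M' : Type} [AddCommGroup M]
    [Module R M] [AddCommGroup M'] [Module R M'] (f : M →ₗ[R] M') :
    CTensor R N M →+ CTensor R N M' :=
  ctlift R N M (fun n m => ctmul R N M' n (f m))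
    (fun n n' m => by rw [ctmul_add_left])
    (fun n m m' => by rw [map_add, ctmul_add_right])
    (fun r n m => by rw [ctmul_smul, map_smul])

/-- The canonical map `(∏ i, N i) ⊗ M → ∏ i, (N i ⊗ M)`. -/
def ctCanonical {ι : Type} (N : ι → Type) [∀ i, AddCommGroup (N i)]
    [∀ i, Module Rᵐᵒᵖ (N i)] (M : Type) [AddCommGroup M] [Module R M] :
    CTensor R (∀ i, N i) M →+ ∀ i, CTensor R (N i) M :=
  ctlift R (∀ i, N i) M (fun n m i => ctmul R (N i) M (n i) m)
    (fun n n' m => by funext i; exact ctmul_add_left _ _ _)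
    (fun n m m' => by funext i; exact ctmul_add_right _ _ _)
    (fun r n m => by funext i; exact ctmul_smul _ _ _)

end Maps

/-- A left `R`-module `M` is Mittag-Leffler relative to a class `K` of right `R`-modules if
for every family `(Nᵢ)` of modules from `K` the canonical map
`(∏ i, Nᵢ) ⊗_R M → ∏ i, (Nᵢ ⊗_R M)` is injective. -/
def IsRelMittagLeffler (R : Type) [Ring R] (K : Set (ModuleCat Rᵐᵒᵖ)) (M : Type)
    [AddCommGroup M] [Module R M] : Prop :=
  ∀ (ι : Type) (N : ι → ModuleCat Rᵐᵒᵖ), (∀ i, N i ∈ K) →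
    Function.Injective (ctCanonical R (fun i => ↥(N i)) M)

/-- A submodule `P` of the left `R`-module `M` is pure if for every right `R`-module `X` the
induced map `X ⊗_R P → X ⊗_R M` is injective. -/
def IsPureSubmodule (R : Type) [Ring R] {M : Type} [AddCommGroup M] [Module R M]
    (P : Submodule R M) : Prop :=
  ∀ X : ModuleCat Rᵐᵒᵖ, Function.Injective (ctmapRight R ↥X P.subtype)


/-!
Both statements come from the naturality in `M` of the canonical map
`c_M : (∏ Nᵢ) ⊗ M → ∏ (Nᵢ ⊗ M)`. For a pure submodule `N ⊆ M`, the composite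
`(∏ Nᵢ) ⊗ N → (∏ Nᵢ) ⊗ M → ∏ (Nᵢ ⊗ M)` is injective and factors through `c_N`.
For a pure extension, an element `z` of `ker c_M` maps into `ker c_{M/N} = 0`, so by right
exactness of `(∏ Nᵢ) ⊗ -` it lifts to some `w ∈ (∏ Nᵢ) ⊗ N`; purity of `N` shows `c_N w = 0`,
hence `w = 0`.
-/

section Development

variable {R : Type} [Ring R]

section Tensor

variable {X : Type} [AddCommGroup X] [Module Rᵐᵒᵖ X] {M : Type} [AddCommGroup M] [Module R M]

theorem ctensor_hom_ext {A : Type} [AddCommGroup A] {f g : CTensor R X M →+ A}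
    (h : ∀ x m, f (ctmul R X M x m) = g (ctmul R X M x m)) : f = g :=
  QuotientAddGroup.addMonoidHom_ext _ <| FreeAbelianGroup.lift_ext _ _ fun p => h p.1 p.2

theorem ctensor_induction {P : CTensor R X M → Prop} (t : CTensor R X M) (zero : P 0)
    (tmul : ∀ x m, P (ctmul R X M x m)) (neg : ∀ a, P a → P (-a))
    (add : ∀ a b, P a → P b → P (a + b)) : P t := by
  obtain ⟨z, rfl⟩ := QuotientAddGroup.mk_surjective t
  induction z using FreeAbelianGroup.induction_on with
  | zero => exact zero
  | of p => exact tmul p.1 p.2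
  | neg a ha => exact neg _ ha
  | add a b ha hb => exact add _ _ ha hb

theorem ctmul_sub_right (x : X) (m m' : M) :
    ctmul R X M x (m - m') = ctmul R X M x m - ctmul R X M x m' := by
  rw [eq_sub_iff_add_eq, ← ctmul_add_right, sub_add_cancel]

@[simp] theorem ctmapRight_ctmul {M' : Type} [AddCommGroup M'] [Module R M'] (f : M →ₗ[R] M')
    (x : X) (m : M) : ctmapRight R X f (ctmul R X M x m) = ctmul R X M' x (f m) :=
  ctlift_ctmul _ _ _ _ _ _ _ _ _

theorem mk_ctmul_eq_of_sub_mem {N : Submodule R M} (x : X) {m m' : M} (h : m - m' ∈ N) :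
    (QuotientAddGroup.mk (ctmul R X M x m) : CTensor R X M ⧸ (ctmapRight R X N.subtype).range)
      = QuotientAddGroup.mk (ctmul R X M x m') := by
  rw [QuotientAddGroup.eq]
  refine ⟨ctmul R X N x ⟨m' - m, by simpa using N.neg_mem h⟩, ?_⟩
  rw [ctmapRight_ctmul, Submodule.subtype_apply, ctmul_sub_right]
  abel

theorem exists_comp_ctmapRight_mkQ_eq_mk' (N : Submodule R M) :
    ∃ φ : CTensor R X (M ⧸ N) →+ CTensor R X M ⧸ (ctmapRight R X N.subtype).range,
      φ.comp (ctmapRight R X N.mkQ) = QuotientAddGroup.mk' _ := by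
  let f : X → M ⧸ N → CTensor R X M ⧸ (ctmapRight R X N.subtype).range := fun x q =>
    Quotient.liftOn q (fun m => QuotientAddGroup.mk (ctmul R X M x m))
      fun _ _ h => mk_ctmul_eq_of_sub_mem x ((Submodule.quotientRel_def N).mp h)
  have hf (x : X) (m : M) : f x (N.mkQ m) = QuotientAddGroup.mk (ctmul R X M x m) := rfl
  refine ⟨ctlift R X (M ⧸ N) f ?_ ?_ ?_, ctensor_hom_ext fun x m => ?_⟩
  · intro x x' q
    obtain ⟨m, rfl⟩ := N.mkQ_surjective q
    rw [hf, hf, hf, ctmul_add_left, QuotientAddGroup.mk_add]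
  · intro x q q'
    obtain ⟨m, rfl⟩ := N.mkQ_surjective q
    obtain ⟨m', rfl⟩ := N.mkQ_surjective q'
    rw [← map_add, hf, hf, hf, ctmul_add_right, QuotientAddGroup.mk_add]
  · intro r x q
    obtain ⟨m, rfl⟩ := N.mkQ_surjective q
    rw [← map_smul, hf, hf, ctmul_smul]
  · rw [AddMonoidHom.comp_apply, ctmapRight_ctmul, ctlift_ctmul, hf]
    rfl

theorem ker_ctmapRight_mkQ_le_range (N : Submodule R M) :
    (ctmapRight R X N.mkQ).ker ≤ (ctmapRight R X N.subtype).range := by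
  intro t ht
  obtain ⟨φ, hφ⟩ := exists_comp_ctmapRight_mkQ_eq_mk' (X := X) N
  have : QuotientAddGroup.mk' (ctmapRight R X N.subtype).range t = 0 := by
    rw [← hφ, AddMonoidHom.comp_apply, AddMonoidHom.mem_ker.mp ht, map_zero]
  rwa [QuotientAddGroup.mk'_apply, QuotientAddGroup.eq_zero_iff] at this

end Tensor

section Canonical

variable {ι : Type} {N : ι → Type} [∀ i, AddCommGroup (N i)] [∀ i, Module Rᵐᵒᵖ (N i)]
  {M : Type} [AddCommGroup M] [Module R M]

@[simp] theorem ctCanonical_ctmul (n : ∀ i, N i) (m : M) :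
    ctCanonical R N M (ctmul R (∀ i, N i) M n m) = fun i => ctmul R (N i) M (n i) m :=
  ctlift_ctmul _ _ _ _ _ _ _ _ _

theorem ctCanonical_ctmapRight {M' : Type} [AddCommGroup M'] [Module R M'] (f : M →ₗ[R] M')
    (t : CTensor R (∀ i, N i) M) (i : ι) :
    ctCanonical R N M' (ctmapRight R (∀ i, N i) f t) i
      = ctmapRight R (N i) f (ctCanonical R N M t i) := by
  induction t using ctensor_induction with
  | zero => simp
  | tmul n m => simp
  | neg a ha => simp only [map_neg, Pi.neg_apply, ha]
  | add a b ha hb => simp only [map_add, Pi.add_apply, ha, hb]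

end Canonical

namespace IsRelMittagLeffler

variable {K : Set (ModuleCat Rᵐᵒᵖ)} {M : Type} [AddCommGroup M] [Module R M]
  {N : Submodule R M}

theorem of_isPureSubmodule_of_quotient (hpure : IsPureSubmodule R N)
    (hN : IsRelMittagLeffler R K N) (hQ : IsRelMittagLeffler R K (M ⧸ N)) :
    IsRelMittagLeffler R K M := by
  intro ι Ns hNs
  rw [injective_iff_map_eq_zero]
  intro z hz
  have hzQ : ctmapRight R (∀ i, Ns i) N.mkQ z = 0 := by
    refine (injective_iff_map_eq_zero _).mp (hQ ι Ns hNs) _ (funext fun i => ?_)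
    rw [ctCanonical_ctmapRight, hz]
    exact map_zero _
  obtain ⟨w, rfl⟩ := ker_ctmapRight_mkQ_le_range N hzQ
  have hw : ctCanonical R (fun i => Ns i) N w = 0 := funext fun i =>
    (injective_iff_map_eq_zero _).mp (hpure (Ns i)) _ <| by
      rw [← ctCanonical_ctmapRight (N := fun i => Ns i), hz]
      rfl
  rw [(injective_iff_map_eq_zero _).mp (hN ι Ns hNs) w hw, map_zero]

theorem of_isPureSubmodule (hpure : IsPureSubmodule R N) (hM : IsRelMittagLeffler R K M) :
    IsRelMittagLeffler R K N := by
  intro ι Ns hNs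
  have hcomp : ⇑(ctCanonical R (fun i => Ns i) M) ∘ ctmapRight R (∀ i, Ns i) N.subtype
      = (fun t i => ctmapRight R (Ns i) N.subtype (t i)) ∘ ctCanonical R (fun i => Ns i) N :=
    funext fun t => funext (ctCanonical_ctmapRight N.subtype t)
  have hinj := (hM ι Ns hNs).comp (hpure (ModuleCat.of Rᵐᵒᵖ (∀ i, Ns i)))
  rw [hcomp] at hinj
  exact hinj.of_comp

end IsRelMittagLeffler

end Development

/-- The class of `K`-Mittag-Leffler modules is closed under pure extensions and pure
submodules: if `N ⊆ M` is pure and both `N` and `M/N` are `K`-Mittag-Leffler then so is `M`;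
moreover any pure submodule of a `K`-Mittag-Leffler module is `K`-Mittag-Leffler. -/
theorem relMittagLeffler_of_pure_extension_and_pure_submodule (R : Type) [Ring R]
    (K : Set (ModuleCat Rᵐᵒᵖ)) :
    (∀ (M : Type) (_ : AddCommGroup M) (_ : Module R M) (N : Submodule R M),
      IsPureSubmodule R N → IsRelMittagLeffler R K ↥N → IsRelMittagLeffler R K (M ⧸ N) →
        IsRelMittagLeffler R K M) ∧
    (∀ (M : Type) (_ : AddCommGroup M) (_ : Module R M) (N : Submodule R M),
      IsPureSubmodule R N → IsRelMittagLeffler R K M → IsRelMittagLeffler R K ↥N) :=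
  ⟨fun _ _ _ _ hpure hN hQ => IsRelMittagLeffler.of_isPureSubmodule_of_quotient hpure hN hQ,
    fun _ _ _ _ hpure hM => IsRelMittagLeffler.of_isPureSubmodule hpure hM⟩
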